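/- Let p > 3 be a prime and let a, b ∈ ℚ_p be nonzero with |a|_p³ < |b|_p². Then the equation x³ + ax = b has a solution x ∈ ℚ_p if and only if 3 divides the p-adic valuation v_p(b) and b_0^{(p−1)/gcd(3,p−1)} ≡ 1 (mod p), where b_0 is the first digit of b. -/

import Mathlib

/-!
If `x` solves `x³ + a x = b`, the condition `|a|³ < |b|²` forces `|a x| < |x³|`, so by the
ultrametric inequality `|b| = |x|³` and `v(b) = 3 v(x)`. Writing `v(b) = 3k`, the substitution
`x = p^k z` turns the equation into `z³ + A z = b*` with `|A| < 1` and `b*` the unit part of `b`.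
Modulo `p` this reads `z̄³ = b₀`; conversely, as `p ≠ 3`, a cube root of `b₀ ≢ 0` is a simple root
of the reduced cubic and lifts by Hensel's lemma. Finally `b₀` is a cube in the cyclic group
`(ℤ/p)ˣ` of order `p - 1` iff `b₀ ^ ((p - 1) / gcd(3, p - 1)) = 1`.
-/

/-- `x0` is the first digit of the nonzero `p`-adic number `x`: the unique integer in
`{1, …, p-1}` congruent modulo `p` to the unit part `x* = x·|x|_p = x·p^{-v_p(x)}`. -/
def isFirstDigit (p : ℕ) [Fact p.Prime] (x : ℚ_[p]) (x0 : ℤ) : Prop :=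
  1 ≤ x0 ∧ x0 ≤ (p : ℤ) - 1 ∧ ‖x * (p : ℚ_[p]) ^ (-x.valuation) - (x0 : ℚ_[p])‖ < 1

theorem IsCyclic.exists_pow_eq_iff {G : Type*} [CommGroup G] [IsCyclic G] [Finite G] (k : ℕ)
    (u : G) : (∃ t, t ^ k = u) ↔ u ^ (Nat.card G / Nat.gcd k (Nat.card G)) = 1 := by
  have hgk := Nat.gcd_dvd_left k (Nat.card G)
  have hgn := Nat.gcd_dvd_right k (Nat.card G)
  -- the `k`-th powers lie in this kernel, and both subgroups have `|G| / gcd k |G|` elements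
  suffices (powMonoidHom k : G →* G).range = (powMonoidHom _).ker by
    simpa using SetLike.ext_iff.1 this u
  refine Subgroup.eq_of_le_of_card_ge ?_ ?_
  · rintro _ ⟨t, rfl⟩
    have hdvd : k * (Nat.card G / Nat.gcd k (Nat.card G)) =
        Nat.card G * (k / Nat.gcd k (Nat.card G)) := by
      rw [← Nat.mul_div_assoc _ hgn, ← Nat.mul_div_assoc _ hgk, mul_comm]
    rw [MonoidHom.mem_ker, powMonoidHom_apply, powMonoidHom_apply, ← pow_mul, hdvd, pow_mul,
      pow_card_eq_one', one_pow]
  · rw [IsCyclic.card_powMonoidHom_ker, IsCyclic.card_powMonoidHom_range,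
      Nat.gcd_comm (Nat.card G) k, Nat.gcd_eq_right (Nat.div_dvd_of_dvd hgn)]

theorem FiniteField.exists_pow_eq_iff {F : Type*} [Field F] [Fintype F] {k : ℕ} (hk : k ≠ 0)
    {a : F} (ha : a ≠ 0) :
    (∃ t, t ^ k = a) ↔ a ^ ((Fintype.card F - 1) / Nat.gcd k (Fintype.card F - 1)) = 1 := by
  have hunits : (∃ t : F, t ^ k = a) ↔ ∃ t : Fˣ, t ^ k = Units.mk0 a ha := by
    constructor
    · rintro ⟨t, rfl⟩
      exact ⟨Units.mk0 t (ne_zero_pow hk ha), by ext; simp⟩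
    · rintro ⟨t, ht⟩
      exact ⟨t, by simpa using congrArg Units.val ht⟩
  rw [hunits, IsCyclic.exists_pow_eq_iff, Nat.card_units, Nat.card_eq_fintype_card,
    ← Units.val_eq_one]
  simp

section Field
variable {K : Type*} [Field K] {a b c x : K}

lemma cubic_mul_eq_iff (hc : c ≠ 0) :
    (c * x) ^ 3 + a * (c * x) = b ↔ x ^ 3 + a * c⁻¹ ^ 2 * x = b * c⁻¹ ^ 3 := by
  have key : (c * x) ^ 3 + a * (c * x) = c ^ 3 * (x ^ 3 + a * c⁻¹ ^ 2 * x) := by field_simp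
  rw [key, ← eq_inv_mul_iff_mul_eq₀ (pow_ne_zero 3 hc), mul_comm b, inv_pow, inv_pow]

end Field

section NormedField
variable {K : Type*} [NormedField K] {a b x : K}

lemma norm_pow_three_lt_sq_mul_inv {c : K} (hc : c ≠ 0) (hab : ‖a‖ ^ 3 < ‖b‖ ^ 2) :
    ‖a * c⁻¹ ^ 2‖ ^ 3 < ‖b * c⁻¹ ^ 3‖ ^ 2 := by
  have : 0 < ‖c⁻¹‖ ^ 6 := pow_pos (norm_pos_iff.2 (inv_ne_zero hc)) 6
  simp only [norm_mul, norm_pow, mul_pow, ← pow_mul]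
  exact mul_lt_mul_of_pos_right hab this

lemma ne_zero_of_norm_pow_three_lt_sq (hab : ‖a‖ ^ 3 < ‖b‖ ^ 2) : b ≠ 0 := by
  rintro rfl
  rw [norm_zero, zero_pow two_ne_zero] at hab
  exact hab.not_ge (by positivity)

variable [IsUltrametricDist K]

lemma norm_lt_sq_of_cubic_eq (h : x ^ 3 + a * x = b) (hab : ‖a‖ ^ 3 < ‖b‖ ^ 2) :
    ‖a‖ < ‖x‖ ^ 2 := by
  by_contra! hxa
  have hb : ‖b‖ ≤ max (‖x‖ ^ 3) (‖a‖ * ‖x‖) := by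
    rw [← h, ← norm_pow, ← norm_mul]
    exact IsUltrametricDist.norm_add_le_max _ _
  have hx := norm_nonneg x
  have ha := norm_nonneg a
  rcases le_total (‖x‖ ^ 3) (‖a‖ * ‖x‖) with hmax | hmax
  · rw [max_eq_right hmax] at hb
    nlinarith [pow_le_pow_left₀ (norm_nonneg b) hb 2,
      mul_le_mul_of_nonneg_left hxa (sq_nonneg ‖a‖)]
  · rw [max_eq_left hmax] at hb
    nlinarith [pow_le_pow_left₀ (norm_nonneg b) hb 2, pow_le_pow_left₀ (sq_nonneg ‖x‖) hxa 3]

lemma norm_eq_pow_three_of_cubic_eq (h : x ^ 3 + a * x = b) (hab : ‖a‖ ^ 3 < ‖b‖ ^ 2) :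
    ‖b‖ = ‖x‖ ^ 3 := by
  have hxa := norm_lt_sq_of_cubic_eq h hab
  have hx : 0 < ‖x‖ := by
    by_contra! hx
    nlinarith [norm_nonneg a, norm_nonneg x]
  have hlt : ‖a * x‖ < ‖x ^ 3‖ := by
    rw [norm_mul, norm_pow, pow_succ]
    exact mul_lt_mul_of_pos_right hxa hx
  rw [← h, IsUltrametricDist.norm_add_eq_max_of_norm_ne_norm hlt.ne', max_eq_left hlt.le,
    norm_pow]

end NormedField

namespace PadicInt
variable {p : ℕ} [Fact p.Prime]

lemma toZMod_eq_zero_iff {z : ℤ_[p]} : toZMod z = 0 ↔ ‖z‖ < 1 := by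
  rw [norm_lt_one_iff_dvd, ← Ideal.mem_span_singleton, ← maximalIdeal_eq_span_p, ← ker_toZMod,
    RingHom.mem_ker]

lemma norm_eq_one_iff_toZMod_ne_zero {z : ℤ_[p]} : ‖z‖ = 1 ↔ toZMod z ≠ 0 := by
  rw [Ne, toZMod_eq_zero_iff, not_lt, (norm_le_one z).ge_iff_eq]

open Polynomial in
theorem exists_cubic_eq_iff (hp : p ≠ 3) {A U : ℤ_[p]} (hA : ‖A‖ < 1) (hU : ‖U‖ = 1) :
    (∃ z : ℤ_[p], z ^ 3 + A * z = U) ↔ ∃ s : ZMod p, s ^ 3 = toZMod U := by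
  have hA0 : toZMod A = 0 := toZMod_eq_zero_iff.2 hA
  constructor
  · rintro ⟨z, rfl⟩
    exact ⟨toZMod z, by simp [hA0]⟩
  · rintro ⟨s, hs⟩
    obtain ⟨t, rfl⟩ := ZMod.ringHom_surjective toZMod s
    have ht : toZMod t ≠ 0 := by
      rintro h
      exact norm_eq_one_iff_toZMod_ne_zero.1 hU (by rw [← hs, h, zero_pow three_ne_zero])
    have h3 : (3 : ZMod p) ≠ 0 := by
      exact_mod_cast (ZMod.natCast_eq_zero_iff 3 p).not.2
        ((Nat.prime_dvd_prime_iff_eq Fact.out Nat.prime_three).not.2 hp)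
    set F : ℤ_[p][X] := X ^ 3 + C A * X - C U
    have hF : ‖F.aeval t‖ < 1 := toZMod_eq_zero_iff.1 (by simp [F, hA0, hs])
    -- `t` is a simple root of `F` modulo `p` because `p ≠ 3`
    have hF' : ‖F.derivative.aeval t‖ = 1 := by
      have hdF : F.derivative.aeval t = 3 * t ^ 2 + A := by simp [F]; norm_num
      rw [hdF, norm_eq_one_iff_toZMod_ne_zero, map_add, map_mul, map_pow, map_ofNat, hA0,
        add_zero]
      exact mul_ne_zero h3 (pow_ne_zero 2 ht)
    obtain ⟨z, hz, -⟩ := hensels_lemma (F := F) (a := t) (by rwa [hF', one_pow])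
    exact ⟨z, sub_eq_zero.1 (by simpa [F] using hz)⟩

end PadicInt

namespace Padic
variable {p : ℕ} [Fact p.Prime] {a b x : ℚ_[p]}

lemma norm_mul_zpow_neg_valuation (hx : x ≠ 0) : ‖x * (p : ℚ_[p]) ^ (-x.valuation)‖ = 1 := by
  have hp : (p : ℝ) ≠ 0 := Nat.cast_ne_zero.2 (Fact.out : p.Prime).ne_zero
  rw [norm_mul, norm_p_zpow, norm_eq_zpow_neg_valuation hx, neg_neg, ← zpow_add₀ hp,
    neg_add_cancel, zpow_zero]

/-- The unit part `x*` of `x`, as a `p`-adic integer; `unitPart 0 = 0`. -/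
noncomputable def unitPart (x : ℚ_[p]) : ℤ_[p] :=
  ⟨x * (p : ℚ_[p]) ^ (-x.valuation), by
    rcases eq_or_ne x 0 with rfl | hx
    · simp
    · exact (norm_mul_zpow_neg_valuation hx).le⟩

lemma coe_unitPart (x : ℚ_[p]) : (unitPart x : ℚ_[p]) = x * (p : ℚ_[p]) ^ (-x.valuation) := rfl

lemma norm_unitPart (hx : x ≠ 0) : ‖unitPart x‖ = 1 :=
  norm_mul_zpow_neg_valuation hx

lemma valuation_eq_three_mul_of_cubic_eq (h : x ^ 3 + a * x = b) (hab : ‖a‖ ^ 3 < ‖b‖ ^ 2) :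
    b.valuation = 3 * x.valuation := by
  have hnorm := norm_eq_pow_three_of_cubic_eq h hab
  have hb : b ≠ 0 := ne_zero_of_norm_pow_three_lt_sq hab
  have hx : x ≠ 0 := by
    rintro rfl
    exact hb (norm_eq_zero.1 (by simpa using hnorm))
  rw [← norm_pow, norm_eq_zpow_neg_valuation hb, norm_eq_zpow_neg_valuation (pow_ne_zero 3 hx),
    valuation_pow] at hnorm
  have hp : (1 : ℝ) < p := Nat.one_lt_cast.2 (Fact.out : p.Prime).one_lt
  have := zpow_right_injective₀ (zero_lt_one.trans hp) hp.ne' hnorm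
  push_cast at this
  linarith

theorem exists_cubic_eq_iff_of_valuation_eq (hp : p ≠ 3) {k : ℤ} (hk : b.valuation = 3 * k)
    (hab : ‖a‖ ^ 3 < ‖b‖ ^ 2) :
    (∃ x : ℚ_[p], x ^ 3 + a * x = b) ↔ ∃ s : ZMod p, s ^ 3 = PadicInt.toZMod (unitPart b) := by
  have hb : b ≠ 0 := ne_zero_of_norm_pow_three_lt_sq hab
  set c : ℚ_[p] := (p : ℚ_[p]) ^ k
  have hc : c ≠ 0 := zpow_ne_zero _ (Nat.cast_ne_zero.2 (Fact.out : p.Prime).ne_zero)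
  have hU : b * c⁻¹ ^ 3 = unitPart b := by
    rw [coe_unitPart, hk, ← zpow_neg, ← zpow_natCast, ← zpow_mul]
    ring_nf
  have hnormU : ‖b * c⁻¹ ^ 3‖ = 1 := by rw [hU, ← PadicInt.norm_def, norm_unitPart hb]
  have hscaled := norm_pow_three_lt_sq_mul_inv hc hab
  have hA : ‖a * c⁻¹ ^ 2‖ < 1 := by
    rw [hnormU, one_pow] at hscaled
    exact (pow_lt_one_iff_of_nonneg (norm_nonneg _) three_ne_zero).1 hscaled
  rw [← PadicInt.exists_cubic_eq_iff hp (A := ⟨_, hA.le⟩) hA (norm_unitPart hb)]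
  constructor
  · rintro ⟨x, hx⟩
    have hz := (cubic_mul_eq_iff hc).1 (by rwa [mul_inv_cancel_left₀ hc] :
      (c * (c⁻¹ * x)) ^ 3 + a * (c * (c⁻¹ * x)) = b)
    -- the normalised cubic again satisfies `‖A‖³ < ‖b*‖²`, so `‖z‖³ = ‖b*‖ = 1`
    have hz1 : ‖c⁻¹ * x‖ = 1 := by
      have := norm_eq_pow_three_of_cubic_eq hz hscaled
      rwa [hnormU, eq_comm, pow_eq_one_iff_of_nonneg (norm_nonneg _) three_ne_zero] at this
    refine ⟨⟨c⁻¹ * x, hz1.le⟩, Subtype.ext ?_⟩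
    push_cast
    rw [← hU]
    exact hz
  · rintro ⟨z, hz⟩
    refine ⟨c * z, (cubic_mul_eq_iff hc).2 ?_⟩
    rw [hU]
    exact_mod_cast congrArg Subtype.val hz

theorem exists_cubic_eq_iff (hp : p ≠ 3) (hab : ‖a‖ ^ 3 < ‖b‖ ^ 2) :
    (∃ x : ℚ_[p], x ^ 3 + a * x = b) ↔
      3 ∣ b.valuation ∧ ∃ s : ZMod p, s ^ 3 = PadicInt.toZMod (unitPart b) := by
  constructor
  · rintro ⟨x, hx⟩
    have hv := valuation_eq_three_mul_of_cubic_eq hx hab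
    exact ⟨⟨_, hv⟩, (exists_cubic_eq_iff_of_valuation_eq hp hv hab).1 ⟨x, hx⟩⟩
  · rintro ⟨⟨k, hk⟩, hs⟩
    exact (exists_cubic_eq_iff_of_valuation_eq hp hk hab).2 hs

end Padic

lemma isFirstDigit.toZMod_unitPart {p : ℕ} [Fact p.Prime] {x : ℚ_[p]} {x0 : ℤ}
    (h : isFirstDigit p x x0) : PadicInt.toZMod (Padic.unitPart x) = x0 := by
  rw [← sub_eq_zero, ← map_intCast PadicInt.toZMod, ← map_sub, PadicInt.toZMod_eq_zero_iff,
    PadicInt.norm_def]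
  exact_mod_cast h.2.2

lemma isFirstDigit.intCast_ne_zero {p : ℕ} [Fact p.Prime] {x : ℚ_[p]} {x0 : ℤ}
    (h : isFirstDigit p x x0) : (x0 : ZMod p) ≠ 0 := by
  obtain ⟨h1, h2, -⟩ := h
  rw [Ne, ZMod.intCast_zmod_eq_zero_iff_dvd]
  intro hdvd
  have := Int.le_of_dvd (by omega) hdvd
  omega

theorem cubic_solvable_iff_of_lt_general (p : ℕ) [Fact p.Prime] (hp : 3 < p)
    (a b : ℚ_[p])
    (hab : ‖a‖ ^ 3 < ‖b‖ ^ 2)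
    (b0 : ℤ) (hb0 : isFirstDigit p b b0) :
    (∃ x : ℚ_[p], x ^ 3 + a * x = b) ↔
      ((3 : ℤ) ∣ b.valuation ∧
        Int.ModEq (p : ℤ) (b0 ^ ((p - 1) / Nat.gcd 3 (p - 1))) 1) := by
  rw [Padic.exists_cubic_eq_iff hp.ne' hab, hb0.toZMod_unitPart,
    FiniteField.exists_pow_eq_iff three_ne_zero hb0.intCast_ne_zero, ZMod.card,
    ← ZMod.intCast_eq_intCast_iff, Int.cast_pow, Int.cast_one]

theorem cubic_solvable_iff_of_lt (p : ℕ) [Fact p.Prime] (hp : 3 < p)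
    (a b : ℚ_[p]) (ha : a ≠ 0) (hb : b ≠ 0)
    (hab : ‖a‖ ^ 3 < ‖b‖ ^ 2)
    (b0 : ℤ) (hb0 : isFirstDigit p b b0) :
    (∃ x : ℚ_[p], x ^ 3 + a * x = b) ↔
      ((3 : ℤ) ∣ b.valuation ∧
        Int.ModEq (p : ℤ) (b0 ^ ((p - 1) / Nat.gcd 3 (p - 1))) 1) :=
  cubic_solvable_iff_of_lt_general p hp a b hab b0 hb0
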